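/- arXiv:2209.04690 — 2 statements merged into one kernel-verified Lean document; each statement's English description precedes it below -/
import Mathlib

section
/- Let m ≤ n, let g : ℝⁿ → ℝᵐ be C² and let x ∈ ℝⁿ be such that Jg(x) has full rank m. Define Π_g(y) = Iₙ − Jg(y)ᵀ (Jg(y) Jg(y)ᵀ)⁻¹ Jg(y) on the open set where Jg has full rank. Then for all u, v ∈ Ker(Jg(x)): (1) the vector (DΠ_g(x)[v]) u is orthogonal to Ker(Jg(x)), i.e. Π_g(x) (DΠ_g(x)[v]) u = 0; and (2) (DΠ_g(x)[v]) u = (DΠ_g(x)[u]) v, where DΠ_g(x)[v] denotes the Fréchet derivative of the matrix-valued map Π_g at x evaluated at v. -/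
open Matrix Set Metric

noncomputable def grad {n : ℕ} (f : (Fin n → ℝ) → ℝ) (x : Fin n → ℝ) : Fin n → ℝ :=
  fun i => fderiv ℝ f x (Pi.single i 1)

noncomputable def hess {n : ℕ} (f : (Fin n → ℝ) → ℝ) (x : Fin n → ℝ) :
    Matrix (Fin n) (Fin n) ℝ :=
  Matrix.of fun i j => fderiv ℝ (fun y => fderiv ℝ f y (Pi.single j 1)) x (Pi.single i 1)

noncomputable def jac {n m : ℕ} (g : (Fin n → ℝ) → Fin m → ℝ) (x : Fin n → ℝ) :
    Matrix (Fin m) (Fin n) ℝ :=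
  Matrix.of fun i j => fderiv ℝ (fun y => g y i) x (Pi.single j 1)

noncomputable def euclNorm {n : ℕ} (v : Fin n → ℝ) : ℝ := Real.sqrt (v ⬝ᵥ v)

/-! Near `x` the Jacobian `A = Jg` keeps full rank, so `Π = Π_g` is given by its formula there
and satisfies `Π² = Π` and `A Π = 0` identically. For `u ∈ Ker A(x)` we have `Π(x) u = u`, and
differentiating `Π² = Π` along `v` and applying it to `u` gives `Π (DΠ[v] u) = 0`. Differentiating
`Dg(y) (Π(y) u) = 0` gives `Dg(x) (DΠ[v] u) = -D²g(x)[v, u]`, symmetric in `u` and `v`. Hence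
`d = DΠ[v] u - DΠ[u] v` lies in `Ker A(x)`, where `Π(x)` is the identity, while `Π(x) d = 0`;
so `d = 0`. Where `Π` is not differentiable, `fderiv` is `0` and both claims are trivial. -/

open Filter Topology

namespace Matrix

section Rank

variable {ι κ : Type*} [Fintype ι] [DecidableEq ι] [Fintype κ]

theorem isUnit_of_rank_eq_card {K : Type*} [Field K] {M : Matrix ι ι K}
    (h : M.rank = Fintype.card ι) : IsUnit M := by
  refine mulVec_surjective_iff_isUnit.1 fun y => ?_
  have : LinearMap.range M.mulVecLin = ⊤ :=
    Submodule.eq_top_of_finrank_eq (by rw [Module.finrank_fintype_fun_eq_card]; exact h)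
  exact LinearMap.range_eq_top.1 this y

theorem rank_eq_card_iff_isUnit_det_mul_transpose (A : Matrix ι κ ℝ) :
    A.rank = Fintype.card ι ↔ IsUnit (A * Aᵀ).det := by
  rw [← isUnit_iff_isUnit_det, ← rank_self_mul_transpose]
  exact ⟨isUnit_of_rank_eq_card, fun h => rank_of_isUnit _ h⟩

end Rank

section KerProj

variable {R : Type*} [CommRing R] {ι κ : Type*} [Fintype ι] [DecidableEq ι] [Fintype κ]
  [DecidableEq κ]

noncomputable def kerProj (A : Matrix ι κ R) : Matrix κ κ R :=
  1 - Aᵀ * (A * Aᵀ)⁻¹ * A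

theorem kerProj_mulVec_of_mulVec_eq_zero {A : Matrix ι κ R} {w : κ → R} (hw : A *ᵥ w = 0) :
    kerProj A *ᵥ w = w := by
  rw [kerProj, sub_mulVec, one_mulVec, ← mulVec_mulVec, hw, mulVec_zero, sub_zero]

theorem mul_kerProj {A : Matrix ι κ R} (hA : IsUnit (A * Aᵀ).det) : A * kerProj A = 0 := by
  rw [kerProj, Matrix.mul_sub, Matrix.mul_one, ← Matrix.mul_assoc, ← Matrix.mul_assoc,
    mul_nonsing_inv _ hA, Matrix.one_mul, sub_self]

theorem kerProj_mul_self {A : Matrix ι κ R} (hA : IsUnit (A * Aᵀ).det) :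
    kerProj A * kerProj A = kerProj A := by
  conv_lhs => enter [1]; rw [kerProj]
  rw [Matrix.sub_mul, Matrix.one_mul, Matrix.mul_assoc, mul_kerProj hA, Matrix.mul_zero,
    sub_zero]

end KerProj

end Matrix

section MulVec

variable {𝕜 : Type*} [NontriviallyNormedField 𝕜] [CompleteSpace 𝕜] {ι κ : Type*} [Fintype ι]
  [Fintype κ] {E : Type*} [NormedAddCommGroup E] [NormedSpace 𝕜 E]

variable (𝕜 ι κ) in
noncomputable def Matrix.mulVecL : (ι → κ → 𝕜) →L[𝕜] (κ → 𝕜) →L[𝕜] (ι → 𝕜) :=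
  (mulVecBilin 𝕜 𝕜 : Matrix ι κ 𝕜 →ₗ[𝕜] (κ → 𝕜) →ₗ[𝕜] ι → 𝕜).toContinuousBilinearMap

theorem DifferentiableAt.matrix_mulVec {M : E → ι → κ → 𝕜} {w : E → κ → 𝕜} {x : E}
    (hM : DifferentiableAt 𝕜 M x) (hw : DifferentiableAt 𝕜 w x) :
    DifferentiableAt 𝕜 (fun y => of (M y) *ᵥ w y) x :=
  ((mulVecL 𝕜 ι κ).hasFDerivAt_of_bilinear hM.hasFDerivAt hw.hasFDerivAt).differentiableAt

theorem fderiv_mulVec_apply {M : E → ι → κ → 𝕜} {w : E → κ → 𝕜} {x : E}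
    (hM : DifferentiableAt 𝕜 M x) (hw : DifferentiableAt 𝕜 w x) (h : E) :
    fderiv 𝕜 (fun y => of (M y) *ᵥ w y) x h
      = of (fderiv 𝕜 M x h) *ᵥ w x + of (M x) *ᵥ fderiv 𝕜 w x h := by
  rw [show (fun y => of (M y) *ᵥ w y) = fun y => mulVecL 𝕜 ι κ (M y) (w y) from rfl,
    (mulVecL 𝕜 ι κ).fderiv_of_bilinear hM hw, add_comm]
  rfl

theorem fderiv_mulVec_const_apply {M : E → ι → κ → 𝕜} {x : E} (hM : DifferentiableAt 𝕜 M x)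
    (u : κ → 𝕜) (h : E) :
    fderiv 𝕜 (fun y => of (M y) *ᵥ u) x h = of (fderiv 𝕜 M x h) *ᵥ u := by
  simp [fderiv_mulVec_apply hM (differentiableAt_const u)]

theorem mulVec_fderiv_mulVec_eq_zero_of_mul_self {P : E → κ → κ → 𝕜} {x : E}
    (hP : DifferentiableAt 𝕜 P x) (hidem : ∀ᶠ y in 𝓝 x, of (P y) * of (P y) = of (P y))
    {u : κ → 𝕜} (hu : of (P x) *ᵥ u = u) (v : E) :
    of (P x) *ᵥ (of (fderiv 𝕜 P x v) *ᵥ u) = 0 := by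
  have hPu := hP.matrix_mulVec (differentiableAt_const u)
  have hPPu : (fun y => of (P y) *ᵥ (of (P y) *ᵥ u)) =ᶠ[𝓝 x] fun y => of (P y) *ᵥ u :=
    hidem.mono fun y hy => by simp only [mulVec_mulVec, hy]
  have := DFunLike.congr_fun (hPPu.fderiv_eq (𝕜 := 𝕜)) v
  simp only [fderiv_mulVec_apply hP hPu, fderiv_mulVec_const_apply hP, hu] at this
  simpa using this

theorem fderiv_apply_fderiv_mulVec {F : Type*} [NormedAddCommGroup F] [NormedSpace 𝕜 F]
    {g : (κ → 𝕜) → F} {P : (κ → 𝕜) → κ → κ → 𝕜} {x : κ → 𝕜}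
    (hg : DifferentiableAt 𝕜 (fderiv 𝕜 g) x) (hP : DifferentiableAt 𝕜 P x) {u : κ → 𝕜}
    (hker : (fun y => fderiv 𝕜 g y (of (P y) *ᵥ u)) =ᶠ[𝓝 x] 0) (v : κ → 𝕜) :
    fderiv 𝕜 g x (of (fderiv 𝕜 P x v) *ᵥ u) = -fderiv 𝕜 (fderiv 𝕜 g) x v (of (P x) *ᵥ u) := by
  have := DFunLike.congr_fun (hker.fderiv_eq (𝕜 := 𝕜)) v
  rw [fderiv_clm_apply hg (hP.matrix_mulVec (differentiableAt_const u))] at this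
  simpa [fderiv_mulVec_const_apply hP, eq_neg_iff_add_eq_zero, add_comm] using this

theorem fderiv_mulVec_comm_of_mul_self {F : Type*} [NormedAddCommGroup F] [NormedSpace 𝕜 F]
    {g : (κ → 𝕜) → F} {P : (κ → 𝕜) → κ → κ → 𝕜} {x : κ → 𝕜}
    (hg : DifferentiableAt 𝕜 (fderiv 𝕜 g) x) (hsymm : IsSymmSndFDerivAt 𝕜 g x)
    (hP : DifferentiableAt 𝕜 P x) (hidem : ∀ᶠ y in 𝓝 x, of (P y) * of (P y) = of (P y))
    (hker : ∀ᶠ y in 𝓝 x, ∀ w, fderiv 𝕜 g y (of (P y) *ᵥ w) = 0)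
    (hfix : ∀ w, fderiv 𝕜 g x w = 0 → of (P x) *ᵥ w = w)
    {u v : κ → 𝕜} (hu : fderiv 𝕜 g x u = 0) (hv : fderiv 𝕜 g x v = 0) :
    of (fderiv 𝕜 P x v) *ᵥ u = of (fderiv 𝕜 P x u) *ᵥ v := by
  set d := of (fderiv 𝕜 P x v) *ᵥ u - of (fderiv 𝕜 P x u) *ᵥ v
  have hd_ker : fderiv 𝕜 g x d = 0 := by
    rw [map_sub, fderiv_apply_fderiv_mulVec hg hP (hker.mono fun y hy => hy u),
      fderiv_apply_fderiv_mulVec hg hP (hker.mono fun y hy => hy v), hfix u hu, hfix v hv,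
      hsymm v u, sub_self]
  have hd_orth : of (P x) *ᵥ d = 0 := by
    rw [mulVec_sub, mulVec_fderiv_mulVec_eq_zero_of_mul_self hP hidem (hfix u hu),
      mulVec_fderiv_mulVec_eq_zero_of_mul_self hP hidem (hfix v hv), sub_zero]
  exact sub_eq_zero.1 ((hfix d hd_ker).symm.trans hd_orth)

end MulVec

section Jacobian

variable {n m : ℕ} {g : (Fin n → ℝ) → Fin m → ℝ}

theorem jac_eq_toMatrix' {y : Fin n → ℝ} (hg : DifferentiableAt ℝ g y) :
    jac g y = LinearMap.toMatrix' (fderiv ℝ g y : (Fin n → ℝ) →ₗ[ℝ] Fin m → ℝ) := by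
  ext i j
  simp [jac, (hasFDerivAt_pi'.1 hg.hasFDerivAt i).fderiv]

theorem jac_mulVec {y : Fin n → ℝ} (hg : DifferentiableAt ℝ g y) (w : Fin n → ℝ) :
    jac g y *ᵥ w = fderiv ℝ g y w := by
  rw [jac_eq_toMatrix' hg, LinearMap.toMatrix'_mulVec]
  rfl

theorem continuous_jac (hg : ContDiff ℝ 1 g) : Continuous (jac g) := by
  have hgd := hg.differentiable one_ne_zero
  simp only [funext fun y => jac_eq_toMatrix' (hgd y)]
  refine continuous_pi fun i => continuous_pi fun j => ?_
  exact (continuous_apply i).comp ((hg.continuous_fderiv one_ne_zero).clm_apply continuous_const)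

theorem eventually_isUnit_det_jac_mul_transpose (hg : ContDiff ℝ 1 g) {x : Fin n → ℝ}
    (hrank : (jac g x).rank = m) : ∀ᶠ y in 𝓝 x, IsUnit (jac g y * (jac g y)ᵀ).det := by
  have hcont : Continuous fun y => (jac g y * (jac g y)ᵀ).det :=
    ((continuous_jac hg).matrix_mul (continuous_jac hg).matrix_transpose).matrix_det
  have hx : IsUnit (jac g x * (jac g x)ᵀ).det :=
    (rank_eq_card_iff_isUnit_det_mul_transpose _).1 (by rw [hrank, Fintype.card_fin])
  exact (hcont.continuousAt.eventually_ne hx.ne_zero).mono fun y hy => hy.isUnit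

theorem eventually_eq_kerProj_jac (hg : ContDiff ℝ 1 g) {x : Fin n → ℝ}
    (hrank : (jac g x).rank = m) {P : (Fin n → ℝ) → Fin n → Fin n → ℝ}
    (hP : ∀ y, (jac g y).rank = m → P y = of.symm (kerProj (jac g y))) :
    ∀ᶠ y in 𝓝 x, of (P y) = kerProj (jac g y) ∧ IsUnit (jac g y * (jac g y)ᵀ).det :=
  (eventually_isUnit_det_jac_mul_transpose hg hrank).mono fun y hy =>
    ⟨by rw [hP y (by simpa using (rank_eq_card_iff_isUnit_det_mul_transpose _).2 hy)]; rfl, hy⟩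

end Jacobian

theorem stmt_6_general {n m : ℕ}
    (g : (Fin n → ℝ) → Fin m → ℝ) (hg : ContDiff ℝ 2 g)
    (x : Fin n → ℝ) (hrank : (jac g x).rank = m)
    (Pig : (Fin n → ℝ) → Fin n → Fin n → ℝ)
    (hPig : ∀ y : Fin n → ℝ, (jac g y).rank = m →
      Pig y = Matrix.of.symm
        ((1 : Matrix (Fin n) (Fin n) ℝ) -
          (jac g y)ᵀ * (jac g y * (jac g y)ᵀ)⁻¹ * jac g y))
    (u v : Fin n → ℝ) (hu : jac g x *ᵥ u = 0) (hv : jac g x *ᵥ v = 0) :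
    Matrix.of (Pig x) *ᵥ (Matrix.of (fderiv ℝ Pig x v) *ᵥ u) = 0 ∧
    Matrix.of (fderiv ℝ Pig x v) *ᵥ u = Matrix.of (fderiv ℝ Pig x u) *ᵥ v := by
  by_cases hP : DifferentiableAt ℝ Pig x
  swap
  · simp [fderiv_zero_of_not_differentiableAt hP]
  have hgd : Differentiable ℝ g := hg.differentiable two_ne_zero
  have hPeq := eventually_eq_kerProj_jac (hg.of_le one_le_two) hrank hPig
  have hidem : ∀ᶠ y in 𝓝 x, of (Pig y) * of (Pig y) = of (Pig y) :=
    hPeq.mono fun y ⟨hy, hunit⟩ => by rw [hy, kerProj_mul_self hunit]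
  have hker : ∀ᶠ y in 𝓝 x, ∀ w, fderiv ℝ g y (of (Pig y) *ᵥ w) = 0 :=
    hPeq.mono fun y ⟨hy, hunit⟩ w => by
      rw [← jac_mulVec (hgd y), hy, mulVec_mulVec, mul_kerProj hunit, zero_mulVec]
  have hfix (w : Fin n → ℝ) (hw : fderiv ℝ g x w = 0) : of (Pig x) *ᵥ w = w := by
    rw [hPeq.self_of_nhds.1]
    exact kerProj_mulVec_of_mulVec_eq_zero (by rwa [jac_mulVec (hgd x)])
  rw [jac_mulVec (hgd x)] at hu hv
  exact ⟨mulVec_fderiv_mulVec_eq_zero_of_mul_self hP hidem (hfix u hu) v,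
    fderiv_mulVec_comm_of_mul_self ((hg.fderiv_right (m := 1) le_rfl).differentiable one_ne_zero x)
      (hg.contDiffAt.isSymmSndFDerivAt (by simp)) hP hidem hker hfix hu hv⟩

/-- the second fundamental form (u,v) ↦ (DΠ_g(x)[v])u of the
constraint submanifold takes values orthogonal to the tangent space and is
symmetric. -/
theorem stmt_6 {n m : ℕ} (hmn : m ≤ n)
    (g : (Fin n → ℝ) → Fin m → ℝ) (hg : ContDiff ℝ 2 g)
    (x : Fin n → ℝ) (hrank : (jac g x).rank = m)
    (Pig : (Fin n → ℝ) → Fin n → Fin n → ℝ)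
    (hPig : ∀ y : Fin n → ℝ, (jac g y).rank = m →
      Pig y = Matrix.of.symm
        ((1 : Matrix (Fin n) (Fin n) ℝ) -
          (jac g y)ᵀ * (jac g y * (jac g y)ᵀ)⁻¹ * jac g y))
    (u v : Fin n → ℝ) (hu : jac g x *ᵥ u = 0) (hv : jac g x *ᵥ v = 0) :
    Matrix.of (Pig x) *ᵥ (Matrix.of (fderiv ℝ Pig x v) *ᵥ u) = 0 ∧
    Matrix.of (fderiv ℝ Pig x v) *ᵥ u = Matrix.of (fderiv ℝ Pig x u) *ᵥ v :=
  stmt_6_general g hg x hrank Pig hPig u v hu hv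
end

section
/- Let m ≤ n, let g : ℝⁿ → ℝᵐ be C², let x* ∈ ℝⁿ with g(x*) = 0 and Jg(x*) of full rank m, and let v ∈ Ker(Jg(x*)) be a unit vector. Let ε > 0 and let γ : (−ε, ε) → ℝⁿ be a C² curve such that γ(0) = x*, γ'(0) = v, ‖γ'(s)‖ = 1 for all s, g(γ(s)) = 0 for all s, and γ(s) ∈ x* + span{v} + Range(Jg(x*)ᵀ) for all s. Then γ''(0) = −Jg(x*)ᵀ (Jg(x*) Jg(x*)ᵀ)⁻¹ q(v), where q(v) ∈ ℝᵐ is the vector with components vᵀ ∇²gᵢ(x*) v, i = 1,…,m. -/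
open Matrix Set Metric

/-! Write `a = γ''(0)` and `J = Jg(x*)`. Differentiating `g ∘ γ = 0` twice gives
`J a = -q(v)`, and differentiating `γ' ⬝ γ' = 1` once gives `v ⬝ a = 0`. Since `γ - x*` stays in
the closed subspace `span {v} ⊔ range Jᵀ`, so do `γ'` and `a`; as `J v = 0`, the `v`-component
of `a` is `(v ⬝ a) / (v ⬝ v) = 0`, so `a = Jᵀ b`. Full rank makes `J Jᵀ` invertible, and
`J Jᵀ b = J a = -q(v)` determines `b`. -/

open Filter Topology

section Curves

variable {𝕜 : Type*} [NontriviallyNormedField 𝕜]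
  {E : Type*} [NormedAddCommGroup E] [NormedSpace 𝕜 E]
  {F : Type*} [NormedAddCommGroup F] [NormedSpace 𝕜 F]

theorem HasDerivAt.eq_zero_of_eventually_eq_const {f : 𝕜 → F} {f' c : F} {s : 𝕜}
    (hf : HasDerivAt f f' s) (h : ∀ᶠ t in 𝓝 s, f t = c) : f' = 0 :=
  (hf.congr_of_eventuallyEq (h.mono fun _ => Eq.symm)).unique (hasDerivAt_const s c)

theorem HasDerivAt.mem_of_eventually_mem {W : Submodule 𝕜 F}
    (hW : IsClosed (W : Set F)) {f : 𝕜 → F} {f' : F} {s : 𝕜} (hf : HasDerivAt f f' s)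
    (h : ∀ᶠ t in 𝓝 s, f t ∈ W) : f' ∈ W := by
  refine hW.mem_of_tendsto (hasDerivAt_iff_tendsto_slope.mp hf) ?_
  filter_upwards [nhdsWithin_le_nhds h] with t ht
  exact W.smul_mem _ (W.sub_mem ht h.self_of_nhds)

theorem fderiv_fderiv_add_fderiv_deriv_deriv_eq_zero {G : E → F} {γ : 𝕜 → E} {s : 𝕜}
    {c : F} (hG : ContDiffAt 𝕜 2 G (γ s)) (hγ : ∀ᶠ t in 𝓝 s, DifferentiableAt 𝕜 γ t)
    (hγ' : DifferentiableAt 𝕜 (deriv γ) s) (hc : ∀ᶠ t in 𝓝 s, G (γ t) = c) :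
    fderiv 𝕜 (fderiv 𝕜 G) (γ s) (deriv γ s) (deriv γ s)
      + fderiv 𝕜 G (γ s) (deriv (deriv γ) s) = 0 := by
  have hGnear : ∀ᶠ t in 𝓝 s, ContDiffAt 𝕜 2 G (γ t) :=
    hγ.self_of_nhds.continuousAt.eventually (hG.eventually (by simp))
  have hfirst : ∀ᶠ t in 𝓝 s, fderiv 𝕜 G (γ t) (deriv γ t) = 0 := by
    filter_upwards [hc.eventually_nhds, hγ, hGnear] with t hct hγt hGt
    exact ((hGt.differentiableAt (by simp)).hasFDerivAt.comp_hasDerivAt t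
      hγt.hasDerivAt).eq_zero_of_eventually_eq_const hct
  have hDG : HasFDerivAt (fderiv 𝕜 G) (fderiv 𝕜 (fderiv 𝕜 G) (γ s)) (γ s) :=
    ((hG.fderiv_right (m := 1) le_rfl).differentiableAt (by simp)).hasFDerivAt
  exact ((hDG.comp_hasDerivAt s hγ.self_of_nhds.hasDerivAt).clm_apply
    hγ'.hasDerivAt).eq_zero_of_eventually_eq_const hfirst

theorem deriv_deriv_mem_of_eventually_sub_mem {W : Submodule 𝕜 F}
    (hW : IsClosed (W : Set F)) {γ : 𝕜 → F} {s : 𝕜} {x : F}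
    (hγ : ∀ᶠ t in 𝓝 s, DifferentiableAt 𝕜 γ t)
    (hγ' : DifferentiableAt 𝕜 (deriv γ) s) (h : ∀ᶠ t in 𝓝 s, γ t - x ∈ W) :
    deriv (deriv γ) s ∈ W := by
  refine hγ'.hasDerivAt.mem_of_eventually_mem hW ?_
  filter_upwards [hγ.eventually_nhds, h.eventually_nhds] with t hγt ht
  exact (hγt.self_of_nhds.hasDerivAt.sub_const x).mem_of_eventually_mem hW ht

end Curves

theorem HasDerivAt.dotProduct {ι : Type*} [Fintype ι] {f g : ℝ → ι → ℝ} {f' g' : ι → ℝ}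
    {s : ℝ} (hf : HasDerivAt f f' s) (hg : HasDerivAt g g' s) :
    HasDerivAt (fun t => f t ⬝ᵥ g t) (f' ⬝ᵥ g s + f s ⬝ᵥ g') s := by
  unfold _root_.dotProduct
  rw [← Finset.sum_add_distrib]
  exact HasDerivAt.fun_sum fun i _ => (hasDerivAt_pi.mp hf i).mul (hasDerivAt_pi.mp hg i)

theorem dotProduct_eq_zero_of_eventually_dotProduct_self_eq {ι : Type*} [Fintype ι]
    {f : ℝ → ι → ℝ} {f' : ι → ℝ} {s c : ℝ} (hf : HasDerivAt f f' s)
    (h : ∀ᶠ t in 𝓝 s, f t ⬝ᵥ f t = c) : f s ⬝ᵥ f' = 0 := by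
  have := (hf.dotProduct hf).eq_zero_of_eventually_eq_const h
  rw [dotProduct_comm] at this
  linarith

section LinearAlgebra

variable {m n R : Type*} [Fintype m] [Fintype n]

theorem Matrix.isUnit_mul_transpose_of_rank_eq_card [DecidableEq m] [Field R] [LinearOrder R]
    [IsStrictOrderedRing R] {J : Matrix m n R} (hJ : J.rank = Fintype.card m) :
    IsUnit (J * Jᵀ) := by
  have hrange : LinearMap.range (J * Jᵀ).mulVecLin = ⊤ := Submodule.eq_top_of_finrank_eq <| by
    rw [← Matrix.rank, rank_self_mul_transpose, hJ, Module.finrank_fintype_fun_eq_card]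
  exact Matrix.mulVec_surjective_iff_isUnit.mp (LinearMap.range_eq_top.mp hrange)

theorem Matrix.transpose_mulVec_inv_mulVec_mulVec_transpose_mulVec [DecidableEq m]
    [CommRing R] {J : Matrix m n R} (hJ : IsUnit (J * Jᵀ)) (b : m → R) :
    Jᵀ *ᵥ ((J * Jᵀ)⁻¹ *ᵥ (J *ᵥ (Jᵀ *ᵥ b))) = Jᵀ *ᵥ b := by
  rw [mulVec_mulVec _ J, mulVec_mulVec _ (J * Jᵀ)⁻¹,
    nonsing_inv_mul _ ((isUnit_iff_isUnit_det _).mp hJ), one_mulVec]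

theorem Matrix.exists_eq_transpose_mulVec_of_mem_sup [Field R] {J : Matrix m n R}
    {v a : n → R} (ha : a ∈ Submodule.span R {v} ⊔ LinearMap.range Jᵀ.mulVecLin) (hv : J *ᵥ v = 0)
    (hvv : v ⬝ᵥ v ≠ 0) (hva : v ⬝ᵥ a = 0) : ∃ b, a = Jᵀ *ᵥ b := by
  obtain ⟨_, hw, _, ⟨b, rfl⟩, rfl⟩ := Submodule.mem_sup.mp ha
  obtain ⟨t, rfl⟩ := Submodule.mem_span_singleton.mp hw
  rw [mulVecLin_apply] at hva ⊢
  rw [dotProduct_add, dotProduct_smul, dotProduct_mulVec, vecMul_transpose, hv, zero_dotProduct,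
    add_zero, smul_eq_mul] at hva
  exact ⟨b, by rw [(mul_eq_zero.mp hva).resolve_right hvv, zero_smul, zero_add]⟩

end LinearAlgebra

theorem jac_mulVec_apply {n m : ℕ} (g : (Fin n → ℝ) → Fin m → ℝ) (x w : Fin n → ℝ)
    (i : Fin m) : (jac g x *ᵥ w) i = fderiv ℝ (fun y => g y i) x w := by
  conv_rhs => rw [pi_eq_sum_univ' w]
  simp [mulVec, dotProduct, jac, mul_comm]

theorem dotProduct_hess_mulVec {n : ℕ} {f : (Fin n → ℝ) → ℝ} {x : Fin n → ℝ}
    (hf : DifferentiableAt ℝ (fderiv ℝ f) x) (v : Fin n → ℝ) :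
    v ⬝ᵥ (hess f x *ᵥ v) = fderiv ℝ (fderiv ℝ f) x v v := by
  have hentry : ∀ i j, hess f x i j
      = fderiv ℝ (fderiv ℝ f) x (Pi.single i 1) (Pi.single j 1) := fun i j => by
    simp [hess, fderiv_clm_apply hf (differentiableAt_const _)]
  conv_rhs => rw [pi_eq_sum_univ' v]
  simp only [map_sum, map_smul, _root_.sum_apply, _root_.smul_apply,
    smul_eq_mul, dotProduct, mulVec, hentry, Finset.mul_sum]
  rw [Finset.sum_comm]
  exact Finset.sum_congr rfl fun _ _ => Finset.sum_congr rfl fun _ _ => by ring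

theorem jac_mulVec_deriv_deriv_eq_neg {n m : ℕ} {g : (Fin n → ℝ) → Fin m → ℝ}
    {γ : ℝ → Fin n → ℝ} {s : ℝ} {c : Fin m → ℝ} (hg : ContDiffAt ℝ 2 g (γ s))
    (hγ : ∀ᶠ t in 𝓝 s, DifferentiableAt ℝ γ t) (hγ' : DifferentiableAt ℝ (deriv γ) s)
    (hc : ∀ᶠ t in 𝓝 s, g (γ t) = c) :
    jac g (γ s) *ᵥ deriv (deriv γ) s
      = -fun i => deriv γ s ⬝ᵥ (hess (fun y => g y i) (γ s) *ᵥ deriv γ s) := by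
  funext i
  have hgi : ContDiffAt ℝ 2 (fun y => g y i) (γ s) := contDiffAt_pi.mp hg i
  have h := fderiv_fderiv_add_fderiv_deriv_deriv_eq_zero hgi hγ hγ'
    (hc.mono fun t ht => congrFun ht i)
  rw [← dotProduct_hess_mulVec ((hgi.fderiv_right (m := 1) le_rfl).differentiableAt (by simp)),
    ← jac_mulVec_apply] at h
  rw [Pi.neg_apply]
  linarith

theorem stmt_8_general {n m : ℕ}
    (g : (Fin n → ℝ) → Fin m → ℝ) (hg : ContDiff ℝ 2 g)
    (xs : Fin n → ℝ) (hrank : (jac g xs).rank = m)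
    (v : Fin n → ℝ) (hv1 : euclNorm v = 1) (hv : jac g xs *ᵥ v = 0)
    (ε : ℝ) (hε : 0 < ε)
    (γ : ℝ → Fin n → ℝ) (hγ : ContDiffOn ℝ 2 γ (Ioo (-ε) ε))
    (hγ0 : γ 0 = xs) (hγ'0 : deriv γ 0 = v)
    (hunit : ∀ s ∈ Ioo (-ε) ε, euclNorm (deriv γ s) = 1)
    (hlevel : ∀ s ∈ Ioo (-ε) ε, g (γ s) = 0)
    (hplane : ∀ s ∈ Ioo (-ε) ε, ∃ (t : ℝ) (b : Fin m → ℝ),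
      γ s = xs + t • v + (jac g xs)ᵀ *ᵥ b) :
    deriv (deriv γ) 0 =
      -((jac g xs)ᵀ *ᵥ ((jac g xs * (jac g xs)ᵀ)⁻¹ *ᵥ
          fun i => v ⬝ᵥ ((hess (fun y => g y i) xs) *ᵥ v))) := by
  have hI : Ioo (-ε) ε ∈ 𝓝 (0 : ℝ) := Ioo_mem_nhds (by linarith) hε
  have hγ1 : ∀ᶠ s in 𝓝 0, DifferentiableAt ℝ γ s :=
    eventually_of_mem hI fun s hs =>
      (hγ.contDiffAt (isOpen_Ioo.mem_nhds hs)).differentiableAt (by simp)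
  have hγ2 : DifferentiableAt ℝ (deriv γ) 0 :=
    (hγ.deriv_of_isOpen isOpen_Ioo (m := 1) le_rfl).contDiffAt hI |>.differentiableAt (by simp)
  set W := Submodule.span ℝ {v} ⊔ LinearMap.range (jac g xs)ᵀ.mulVecLin
  have hγW : ∀ᶠ s in 𝓝 0, γ s - xs ∈ W := eventually_of_mem hI fun s hs => by
    obtain ⟨t, b, hb⟩ := hplane s hs
    rw [hb, add_assoc, add_sub_cancel_left]
    exact W.add_mem (Submodule.mem_sup_left (Submodule.smul_mem _ t
      (Submodule.mem_span_singleton_self v))) (Submodule.mem_sup_right ⟨b, rfl⟩)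
  have hγ''W : deriv (deriv γ) 0 ∈ W := deriv_deriv_mem_of_eventually_sub_mem
    (Submodule.closed_of_finiteDimensional W) hγ1 hγ2 hγW
  have hva : v ⬝ᵥ deriv (deriv γ) 0 = 0 := hγ'0 ▸
    dotProduct_eq_zero_of_eventually_dotProduct_self_eq hγ2.hasDerivAt
      (eventually_of_mem hI fun s hs => Real.sqrt_eq_one.mp (hunit s hs))
  have hJa := jac_mulVec_deriv_deriv_eq_neg hg.contDiffAt hγ1 hγ2 (eventually_of_mem hI hlevel)
  rw [hγ0, hγ'0] at hJa
  obtain ⟨b, hb⟩ := Matrix.exists_eq_transpose_mulVec_of_mem_sup hγ''W hv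
    (by simp [Real.sqrt_eq_one.mp hv1]) hva
  have hJJ := Matrix.isUnit_mul_transpose_of_rank_eq_card (J := jac g xs) (by simpa using hrank)
  rw [hb, ← Matrix.transpose_mulVec_inv_mulVec_mulVec_transpose_mulVec hJJ, ← hb, hJa,
    mulVec_neg, mulVec_neg]

/-- the second derivative at 0 of an arc-length parametrized normal
section of the constraint submanifold {g = 0} equals the second fundamental form
value h(v,v) = -Jg(x*)ᵀ(Jg(x*)Jg(x*)ᵀ)⁻¹ q(v). -/
theorem stmt_8 {n m : ℕ} (hmn : m ≤ n)
    (g : (Fin n → ℝ) → Fin m → ℝ) (hg : ContDiff ℝ 2 g)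
    (xs : Fin n → ℝ) (hgxs : g xs = 0) (hrank : (jac g xs).rank = m)
    (v : Fin n → ℝ) (hv1 : euclNorm v = 1) (hv : jac g xs *ᵥ v = 0)
    (ε : ℝ) (hε : 0 < ε)
    (γ : ℝ → Fin n → ℝ) (hγ : ContDiffOn ℝ 2 γ (Ioo (-ε) ε))
    (hγ0 : γ 0 = xs) (hγ'0 : deriv γ 0 = v)
    (hunit : ∀ s ∈ Ioo (-ε) ε, euclNorm (deriv γ s) = 1)
    (hlevel : ∀ s ∈ Ioo (-ε) ε, g (γ s) = 0)
    (hplane : ∀ s ∈ Ioo (-ε) ε, ∃ (t : ℝ) (b : Fin m → ℝ),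
      γ s = xs + t • v + (jac g xs)ᵀ *ᵥ b) :
    deriv (deriv γ) 0 =
      -((jac g xs)ᵀ *ᵥ ((jac g xs * (jac g xs)ᵀ)⁻¹ *ᵥ
          fun i => v ⬝ᵥ ((hess (fun y => g y i) xs) *ᵥ v))) :=
  stmt_8_general g hg xs hrank v hv1 hv ε hε γ hγ hγ0 hγ'0 hunit hlevel hplane
end
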